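/- (Property 1, comparison with the double estimator) For every K with 1 ≤ K ≤ N, E[μ̂^B_{a_K*}] ≥ E[μ̂*_DE]; i.e., the expected value of the action candidate based double estimator with any number of candidates is at least the expected value of the double estimator. -/

import Mathlib

open MeasureTheory ProbabilityTheory Finset

noncomputable section

/-- The (random) set `M_K` of indices whose `B`-value is among the `K` largest values
among `B 1 ω, …, B N ω`: an index belongs to it iff fewer than `K` indices have a
strictly larger `B`-value. -/
def topK {Ω : Type*} {N : ℕ} (B : Fin N → Ω → ℝ) (K : ℕ) (ω : Ω) : Finset (Fin N) :=
  Finset.univ.filter fun i => (Finset.univ.filter fun j => B i ω < B j ω).card < K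

/-- An element of the finite set `s` at which `f` is maximal over `s`. -/
def argmaxOn {α : Type*} [Nonempty α] (f : α → ℝ) (s : Finset α) : α :=
  if h : s.Nonempty then (s.exists_max_image f h).choose else Classical.arbitrary α

/-- `a_K*`: the index of `M_K` at which `i ↦ A i ω` is maximal over `M_K`. -/
def aK {Ω : Type*} {N : ℕ} [NeZero N] (A B : Fin N → Ω → ℝ) (K : ℕ) (ω : Ω) : Fin N :=
  argmaxOn (fun i => A i ω) (topK B K ω)

/-- `a*`: the index at which `i ↦ A i ω` is maximal over all indices. -/
def aStar {Ω : Type*} {N : ℕ} [NeZero N] (A : Fin N → Ω → ℝ) (ω : Ω) : Fin N :=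
  argmaxOn (fun i => A i ω) Finset.univ

/-- The pointwise maximum `max_{1 ≤ i ≤ N} C i ω` (e.g. the single estimator `μ̂*_SE`). -/
def maxOf {Ω : Type*} {N : ℕ} [NeZero N] (C : Fin N → Ω → ℝ) (ω : Ω) : ℝ :=
  Finset.univ.sup' Finset.univ_nonempty fun i => C i ω

/-- `a_(j)`: the index carrying the `j`-th largest value among `B 1 ω, …, B N ω`
(exactly `j - 1` indices have a strictly larger value). -/
def rankIdx {Ω : Type*} {N : ℕ} [NeZero N] (B : Fin N → Ω → ℝ) (j : ℕ) (ω : Ω) : Fin N :=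
  if h : ∃ i, (Finset.univ.filter fun k => B i ω < B k ω).card = j - 1 then h.choose
  else Classical.arbitrary (Fin N)

end

section lemmas

lemma argmaxOn_mem {α : Type*} [Nonempty α] (f : α → ℝ) {s : Finset α} (h : s.Nonempty) :
    argmaxOn f s ∈ s := by
  unfold argmaxOn
  rw [dif_pos h]
  exact (s.exists_max_image f h).choose_spec.1

lemma le_argmaxOn {α : Type*} [Nonempty α] (f : α → ℝ) {s : Finset α} (h : s.Nonempty)
    {x : α} (hx : x ∈ s) : f x ≤ f (argmaxOn f s) := by
  unfold argmaxOn
  rw [dif_pos h]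
  exact (s.exists_max_image f h).choose_spec.2 x hx

lemma topK_nonempty {Ω : Type*} {N : ℕ} [NeZero N] (B : Fin N → Ω → ℝ) {K : ℕ}
    (hK : 1 ≤ K) (ω : Ω) : (topK B K ω).Nonempty := by
  obtain ⟨i, -, hi⟩ := Finset.exists_max_image Finset.univ (fun j => B j ω) Finset.univ_nonempty
  refine ⟨i, ?_⟩
  simp only [topK, Finset.mem_filter, Finset.mem_univ, true_and]
  have : (Finset.univ.filter fun j => B i ω < B j ω) = ∅ := by
    refine Finset.filter_eq_empty_iff.mpr fun j _ => not_lt.mpr (hi j (Finset.mem_univ j))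
  rw [this]
  simpa using Nat.lt_of_lt_of_le Nat.zero_lt_one hK

lemma key_pointwise {Ω : Type*} {N : ℕ} [NeZero N] (A B : Fin N → Ω → ℝ) {K : ℕ}
    (hK : 1 ≤ K) (ω : Ω) (hA : Function.Injective fun i => A i ω)
    (hB : Function.Injective fun i => B i ω) :
    B (aStar A ω) ω ≤ B (aK A B K ω) ω := by
  set a := aStar A ω with ha
  set b := aK A B K ω with hb
  have hne : (topK B K ω).Nonempty := topK_nonempty B hK ω
  have hbmem : b ∈ topK B K ω := argmaxOn_mem _ hne
  by_cases hmem : a ∈ topK B K ω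
  · -- then b = a
    have h1 : A a ω ≤ A b ω := le_argmaxOn (f := fun i => A i ω) hne hmem
    have h2 : A b ω ≤ A a ω := le_argmaxOn (f := fun i => A i ω) Finset.univ_nonempty (Finset.mem_univ b)
    have : b = a := hA (le_antisymm h2 h1)
    rw [this]
  · -- a not in topK: B a < B b
    have hKle : K ≤ (Finset.univ.filter fun j => B a ω < B j ω).card := by
      by_contra h
      exact hmem (by simp only [topK, Finset.mem_filter, Finset.mem_univ, true_and]; omega)
    have hblt : (Finset.univ.filter fun j => B b ω < B j ω).card < K := by
      have := hbmem
      simpa only [topK, Finset.mem_filter, Finset.mem_univ, true_and] using this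
    by_contra h
    push_neg at h
    have hne' : b ≠ a := by
      intro he; rw [he] at hbmem; exact hmem hbmem
    have hlt : B b ω < B a ω := lt_of_le_of_ne h.le (fun he => hne' (hB he))
    have hsub : (Finset.univ.filter fun j => B a ω < B j ω) ⊆
        (Finset.univ.filter fun j => B b ω < B j ω) := by
      intro j hj
      simp only [Finset.mem_filter, Finset.mem_univ, true_and] at hj ⊢
      exact hlt.trans hj
    have := Finset.card_le_card hsub
    omega

end lemmas

theorem stmt2 {Ω : Type*} [MeasurableSpace Ω] (P : MeasureTheory.Measure Ω)
    [MeasureTheory.IsProbabilityMeasure P]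
    (N : ℕ) [NeZero N] (hN : 2 ≤ N)
    (A B C : Fin N → Ω → ℝ)
    (hAmeas : ∀ i, Measurable (A i)) (hBmeas : ∀ i, Measurable (B i))
    (hCmeas : ∀ i, Measurable (C i))
    (hAint : ∀ i, MeasureTheory.Integrable (A i) P)
    (hBint : ∀ i, MeasureTheory.Integrable (B i) P)
    (hCint : ∀ i, MeasureTheory.Integrable (C i) P)
    (hAdist : ∀ᵐ ω ∂P, Function.Injective fun i => A i ω)
    (hBdist : ∀ᵐ ω ∂P, Function.Injective fun i => B i ω)
    :
    ∀ K, 1 ≤ K → K ≤ N →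
      ∫ ω, B (aStar A ω) ω ∂P ≤ ∫ ω, B (aK A B K ω) ω ∂P := by
  intro K hK1 hKN
  -- measurable representatives
  classical
  -- topK membership is measurable
  have htopKmeas : ∀ i : Fin N, MeasurableSet {ω | i ∈ topK B K ω} := by
    intro i
    have hcard : Measurable fun ω => (Finset.univ.filter fun j => B i ω < B j ω).card := by
      simp_rw [Finset.card_filter]
      exact Finset.measurable_sum _ fun j _ =>
        Measurable.ite (measurableSet_lt (hBmeas i) (hBmeas j)) measurable_const measurable_const
    have : {ω | i ∈ topK B K ω} =
        (fun ω => (Finset.univ.filter fun j => B i ω < B j ω).card) ⁻¹' (Set.Iio K) := by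
      ext ω
      simp [topK]
    rw [this]
    exact hcard measurableSet_Iio
  set S1 : Fin N → Set Ω := fun i => {ω | ∀ j, j ≠ i → A j ω < A i ω} with hS1
  set S2 : Fin N → Set Ω := fun i =>
    {ω | i ∈ topK B K ω ∧ ∀ j, j ∈ topK B K ω → j ≠ i → A j ω < A i ω} with hS2
  have hS1meas : ∀ i, MeasurableSet (S1 i) := by
    intro i
    have : S1 i = ⋂ j, {ω | j ≠ i → A j ω < A i ω} := by
      ext ω; simp [hS1]
    rw [this]
    refine MeasurableSet.iInter fun j => ?_
    by_cases hj : j = i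
    · simp [hj]
    · simp only [hj, ne_eq, not_false_eq_true, forall_true_left]
      exact measurableSet_lt (hAmeas j) (hAmeas i)
  have hS2meas : ∀ i, MeasurableSet (S2 i) := by
    intro i
    refine (htopKmeas i).inter ?_
    have : {ω | ∀ j, j ∈ topK B K ω → j ≠ i → A j ω < A i ω} =
        ⋂ j, ({ω | j ∈ topK B K ω} ∩ {ω | j ≠ i})ᶜ ∪ {ω | A j ω < A i ω} := by
      ext ω
      simp only [Set.mem_iInter, Set.mem_setOf_eq, Set.mem_union, Set.mem_compl_iff,
        Set.mem_inter_iff]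
      constructor
      · intro h j
        by_cases h1 : j ∈ topK B K ω
        · by_cases h2 : j ≠ i
          · exact Or.inr (h j h1 h2)
          · exact Or.inl (fun hc => h2 hc.2)
        · exact Or.inl (fun hc => h1 hc.1)
      · intro h j h1 h2
        rcases h j with hc | hlt
        · exact absurd ⟨h1, h2⟩ hc
        · exact hlt
    have hm : MeasurableSet (⋂ j, ({ω | j ∈ topK B K ω} ∩ {ω | j ≠ i})ᶜ ∪ {ω | A j ω < A i ω}) := by
      refine MeasurableSet.iInter fun j => ?_
      refine MeasurableSet.union ?_ (measurableSet_lt (hAmeas j) (hAmeas i))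
      exact ((htopKmeas j).inter (by by_cases hj : j = i <;> simp [hj])).compl
    show MeasurableSet {ω | ∀ j ∈ topK B K ω, j ≠ i → A j ω < A i ω}
    rw [this]
    exact hm
  set G1 : Ω → ℝ := fun ω => ∑ i, (S1 i).indicator (fun ω => B i ω) ω with hG1
  set G2 : Ω → ℝ := fun ω => ∑ i, (S2 i).indicator (fun ω => B i ω) ω with hG2
  have hG1meas : Measurable G1 :=
    Finset.measurable_sum _ fun i _ => (hBmeas i).indicator (hS1meas i)
  have hG2meas : Measurable G2 :=
    Finset.measurable_sum _ fun i _ => (hBmeas i).indicator (hS2meas i)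
  -- a.e. equality with the target functions
  have hG1eq : G1 =ᵐ[P] fun ω => B (aStar A ω) ω := by
    filter_upwards [hAdist] with ω hA
    have hspec : ∀ x : Fin N, A x ω ≤ A (aStar A ω) ω := fun x =>
      le_argmaxOn (f := fun i => A i ω) Finset.univ_nonempty (Finset.mem_univ x)
    rw [hG1]
    dsimp only
    rw [Finset.sum_eq_single_of_mem (aStar A ω) (Finset.mem_univ _)]
    · refine Set.indicator_of_mem ?_ _
      intro j hj
      exact lt_of_le_of_ne (hspec j) (fun he => hj (hA he))
    · intro i _ hi
      refine Set.indicator_of_notMem ?_ _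
      intro hmem
      exact absurd (hspec i) (not_le.mpr (hmem (aStar A ω) (Ne.symm hi)))
  have hG2eq : G2 =ᵐ[P] fun ω => B (aK A B K ω) ω := by
    filter_upwards [hAdist] with ω hA
    have hne : (topK B K ω).Nonempty := topK_nonempty B hK1 ω
    have hmem : aK A B K ω ∈ topK B K ω := argmaxOn_mem _ hne
    have hspec : ∀ x ∈ topK B K ω, A x ω ≤ A (aK A B K ω) ω := fun x hx =>
      le_argmaxOn (f := fun i => A i ω) hne hx
    rw [hG2]
    dsimp only
    rw [Finset.sum_eq_single_of_mem (aK A B K ω) (Finset.mem_univ _)]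
    · refine Set.indicator_of_mem ?_ _
      exact ⟨hmem, fun j hj hji => lt_of_le_of_ne (hspec j hj) (fun he => hji (hA he))⟩
    · intro i _ hi
      refine Set.indicator_of_notMem ?_ _
      rintro ⟨hitop, hmax⟩
      exact absurd (hspec i hitop) (not_le.mpr (hmax (aK A B K ω) hmem (Ne.symm hi)))
  -- integrability
  have hbound : MeasureTheory.Integrable (fun ω => ∑ i, |B i ω|) P :=
    MeasureTheory.integrable_finset_sum _ fun i _ => (hBint i).abs
  have hint1 : MeasureTheory.Integrable (fun ω => B (aStar A ω) ω) P := by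
    refine MeasureTheory.Integrable.mono' hbound
      (hG1meas.aestronglyMeasurable.congr hG1eq) ?_
    filter_upwards with ω
    calc ‖B (aStar A ω) ω‖ = |B (aStar A ω) ω| := rfl
    _ ≤ ∑ i, |B i ω| := Finset.single_le_sum (f := fun i => |B i ω|) (fun i _ => abs_nonneg _) (Finset.mem_univ _)
  have hint2 : MeasureTheory.Integrable (fun ω => B (aK A B K ω) ω) P := by
    refine MeasureTheory.Integrable.mono' hbound
      (hG2meas.aestronglyMeasurable.congr hG2eq) ?_
    filter_upwards with ω
    calc ‖B (aK A B K ω) ω‖ = |B (aK A B K ω) ω| := rfl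
    _ ≤ ∑ i, |B i ω| := Finset.single_le_sum (f := fun i => |B i ω|) (fun i _ => abs_nonneg _) (Finset.mem_univ _)
  refine MeasureTheory.integral_mono_ae hint1 hint2 ?_
  filter_upwards [hAdist, hBdist] with ω hA hB
  exact key_pointwise A B hK1 ω hA hB
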